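/- arXiv:2409.06425 — 2 statements merged into one kernel-verified Lean document; each statement's English description precedes it below -/
import Mathlib

section
/- For all positive integers r < k with r ≥ 2, the Turán density t(k,r) = lim_{n→∞} T(n,k,r)/C(n,r) equals s*([0,1],k,r), the infimum of λ(C) over all Lebesgue measurable symmetric covering (k−r)-insertion codes C ⊆ [0,1]^r. -/
open MeasureTheory Filter Topology ENNReal

/-- `x` covers `a` if `x` is a subsequence of `a`. -/
def Covers {X : Type*} {r k : ℕ} (x : Fin r → X) (a : Fin k → X) : Prop :=
  ∃ g : Fin r → Fin k, StrictMono g ∧ ∀ i, a (g i) = x i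

/-- `C ⊆ X^r` is a covering `(k-r)`-insertion code over `X`: every sequence in `X^k`
is covered by some sequence in `C`. -/
def IsCoveringCode {X : Type*} (r k : ℕ) (C : Set (Fin r → X)) : Prop :=
  ∀ a : Fin k → X, ∃ x ∈ C, Covers x a

/-- Minimum size of a covering `(k-r)`-insertion code over the alphabet `[n]`. -/
noncomputable def covNum (n k r : ℕ) : ℕ :=
  sInf {m | ∃ C : Finset (Fin r → Fin n), IsCoveringCode r k (↑C : Set (Fin r → Fin n)) ∧ C.card = m}

/-- The unit cube `[0,1]^r`. -/
def unitCube (r : ℕ) : Set (Fin r → ℝ) := {x | ∀ i, x i ∈ Set.Icc (0 : ℝ) 1}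

/-- `C ⊆ [0,1]^r` covers `[0,1]^k`. -/
def CoversCube (r k : ℕ) (C : Set (Fin r → ℝ)) : Prop :=
  ∀ a ∈ unitCube k, ∃ x ∈ C, Covers x a

/-- Delete the `i`-th coordinate of a length `r+1` sequence. -/
def deleteAt {X : Type*} {r : ℕ} (i : Fin (r + 1)) (x : Fin (r + 1) → X) : Fin r → X :=
  x ∘ i.succAbove

/-- `extSet C i` is the set `C_i` of sequences in `X^{r+1}` whose subsequence obtained by
deleting the `i`-th coordinate belongs to `C`. -/
def extSet {X : Type*} {r : ℕ} (C : Set (Fin r → X)) (i : Fin (r + 1)) :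
    Set (Fin (r + 1) → X) :=
  {x | deleteAt i x ∈ C}

/-- A set of sequences is symmetric if it is closed under permuting the coordinates. -/
def IsSymmetric {X : Type*} {k : ℕ} (M : Set (Fin k → X)) : Prop :=
  ∀ x ∈ M, ∀ σ : Equiv.Perm (Fin k), x ∘ σ ∈ M

/-- The symmetric closure of a set of sequences. -/
def SymClosure {X : Type*} {k : ℕ} (M : Set (Fin k → X)) : Set (Fin k → X) :=
  {x | ∃ σ : Equiv.Perm (Fin k), x ∘ σ ∈ M}

/-- A Turán `(n,k,r)`-system: a family of `r`-element subsets of `[n]` such that every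
`k`-element subset of `[n]` contains a member of the family. -/
def IsTuranSystem (n k r : ℕ) (F : Finset (Finset (Fin n))) : Prop :=
  (∀ A ∈ F, A.card = r) ∧ ∀ K : Finset (Fin n), K.card = k → ∃ A ∈ F, A ⊆ K

/-- Minimum size of a Turán `(n,k,r)`-system. -/
noncomputable def turanNum (n k r : ℕ) : ℕ :=
  sInf {m | ∃ F : Finset (Finset (Fin n)), IsTuranSystem n k r F ∧ F.card = m}

/-!
If `C ⊆ [0,1]^r` is a measurable covering code and `u` is uniform in `[0,1]^n`, the `r`-sets
`S ⊆ [n]` on which `u`, read in increasing order, lands in `C` form a Turán `(n,k,r)`-system of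
expected size `C(n,r) λ(C)`; hence `T(n,k,r) ≤ C(n,r) λ(C)` and `t(k,r) ≤ λ(C)`.

Conversely, cut `[0,1]` into `n` cells and let `F` be an optimal Turán `(n,k,r)`-system. The
points of `[0,1]^r` whose word of cells either repeats a cell or has its set of cells in `F` form
a symmetric covering code of measure at most `1 - n^(r)/n^r + r! T(n,k,r)/n^r`, where `n^(r)` is
the falling factorial, and this tends to `t(k,r)`.
-/

open Finset Function

theorem MeasureTheory.Measure.pi_map_comp_of_injective {ι κ α : Type*} [Fintype ι] [Fintype κ]
    [MeasurableSpace α] (μ : Measure α) [IsProbabilityMeasure μ] {f : ι → κ}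
    (hf : Injective f) :
    (Measure.pi fun _ : κ => μ).map (fun u => u ∘ f) = Measure.pi fun _ : ι => μ := by
  classical
  symm
  refine Measure.pi_eq fun s hs => ?_
  have hpre : (fun u : κ → α => u ∘ f) ⁻¹' Set.univ.pi s
      = Set.univ.pi (Function.extend f s fun _ => Set.univ) := by
    ext u
    simp only [Set.mem_preimage, Set.mem_univ_pi, comp_apply]
    refine ⟨fun h j => ?_, fun h i => by simpa [hf.extend_apply] using h (f i)⟩
    by_cases hj : ∃ i, f i = j
    · obtain ⟨i, rfl⟩ := hj
      simpa [hf.extend_apply] using h i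
    · simp [extend_apply' _ _ _ hj]
  rw [Measure.map_apply (by fun_prop) (.univ_pi hs), hpre, Measure.pi_pi]
  refine (Fintype.prod_of_injective f hf _ _ (fun j hj => ?_) fun i => by
    rw [hf.extend_apply]).symm
  rw [extend_apply' _ _ _ (by simpa using hj), measure_univ]

lemma unitCube_eq_pi (r : ℕ) : unitCube r = Set.univ.pi fun _ => Set.Icc (0 : ℝ) 1 := by
  ext x
  simp [unitCube, Pi.le_def, forall_and]

lemma measurableSet_unitCube (r : ℕ) : MeasurableSet (unitCube r) :=
  unitCube_eq_pi r ▸ .univ_pi fun _ => measurableSet_Icc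

lemma volume_restrict_unitCube (r : ℕ) :
    volume.restrict (unitCube r)
      = Measure.pi fun _ : Fin r => volume.restrict (Set.Icc (0 : ℝ) 1) := by
  rw [unitCube_eq_pi, ← Measure.restrict_pi_pi, volume_pi]

instance : IsProbabilityMeasure (volume.restrict (Set.Icc (0 : ℝ) 1)) := ⟨by simp⟩

instance (r : ℕ) : IsProbabilityMeasure (volume.restrict (unitCube r)) := by
  rw [volume_restrict_unitCube]
  infer_instance

lemma map_comp_volume_restrict_unitCube {r n : ℕ} {f : Fin r → Fin n} (hf : Injective f) :
    (volume.restrict (unitCube n)).map (fun u => u ∘ f) = volume.restrict (unitCube r) := by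
  rw [volume_restrict_unitCube, volume_restrict_unitCube, Measure.pi_map_comp_of_injective _ hf]

lemma volume_unitCube (r : ℕ) : volume (unitCube r) = 1 := by
  rw [unitCube_eq_pi, volume_pi_pi]
  simp

lemma turanNum_le_card {n k r : ℕ} {F : Finset (Finset (Fin n))} (hF : IsTuranSystem n k r F) :
    turanNum n k r ≤ #F :=
  Nat.sInf_le ⟨F, hF, rfl⟩

lemma exists_isTuranSystem_card_eq_turanNum {n k r : ℕ} (hrk : r ≤ k) :
    ∃ F, IsTuranSystem n k r F ∧ #F = turanNum n k r := by
  refine Nat.sInf_mem (s := {m | ∃ F, IsTuranSystem n k r F ∧ #F = m})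
    ⟨_, powersetCard r univ, ⟨fun A hA => (mem_powersetCard.1 hA).2, fun K hK => ?_⟩, rfl⟩
  obtain ⟨A, hAK, hA⟩ := exists_subset_card_eq (hK ▸ hrk : r ≤ #K)
  exact ⟨A, mem_powersetCard.2 ⟨subset_univ A, hA⟩, hAK⟩

-- Empty unless `#S = r`; the existential over `#S = r` lets `S` range over all finsets.
def traceSet {n r : ℕ} (S : Finset (Fin n)) (C : Set (Fin r → ℝ)) : Set (Fin n → ℝ) :=
  {u | ∃ h : #S = r, u ∘ S.orderEmbOfFin h ∈ C}

lemma traceSet_eq_preimage {n r : ℕ} {S : Finset (Fin n)} (hS : #S = r)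
    (C : Set (Fin r → ℝ)) :
    traceSet S C = (fun u => u ∘ S.orderEmbOfFin hS) ⁻¹' C := by
  ext u
  simp [traceSet, hS]

lemma measurableSet_traceSet {n r : ℕ} {S : Finset (Fin n)} (hS : #S = r)
    {C : Set (Fin r → ℝ)} (hC : MeasurableSet C) : MeasurableSet (traceSet S C) :=
  traceSet_eq_preimage hS C ▸ (by fun_prop : Measurable _) hC

lemma volume_restrict_unitCube_traceSet {n r : ℕ} {S : Finset (Fin n)} (hS : #S = r)
    {C : Set (Fin r → ℝ)} (hC : MeasurableSet C) (hsub : C ⊆ unitCube r) :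
    volume.restrict (unitCube n) (traceSet S C) = volume C := by
  rw [traceSet_eq_preimage hS, ← Measure.map_apply (by fun_prop) hC,
    map_comp_volume_restrict_unitCube (S.orderEmbOfFin hS).injective,
    Measure.restrict_eq_self _ hsub]

open Classical in
noncomputable def traceFamily {n : ℕ} (r : ℕ) (C : Set (Fin r → ℝ)) (u : Fin n → ℝ) :
    Finset (Finset (Fin n)) :=
  (powersetCard r univ).filter fun S => u ∈ traceSet S C

lemma isTuranSystem_traceFamily {n k r : ℕ} {C : Set (Fin r → ℝ)} (hcov : CoversCube r k C)
    {u : Fin n → ℝ} (hu : u ∈ unitCube n) : IsTuranSystem n k r (traceFamily r C u) := by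
  classical
  refine ⟨fun A hA => (mem_powersetCard.1 (mem_filter.1 hA).1).2, fun K hK => ?_⟩
  obtain ⟨x, hxC, g, hg, hgx⟩ := hcov (u ∘ K.orderEmbOfFin hK) fun i => hu _
  set e := K.orderEmbOfFin hK ∘ g
  have he : StrictMono e := (K.orderEmbOfFin hK).strictMono.comp hg
  have hcard : #(univ.image e) = r := by
    rw [card_image_of_injective _ he.injective, card_univ, Fintype.card_fin]
  refine ⟨univ.image e,
    mem_filter.2 ⟨mem_powersetCard.2 ⟨subset_univ _, hcard⟩, hcard, ?_⟩, ?_⟩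
  · rwa [← orderEmbOfFin_unique hcard (fun i => mem_image_of_mem e (mem_univ i)) he,
      show u ∘ e = x from funext hgx]
  · simp only [subset_iff, mem_image, mem_univ, true_and]
    rintro _ ⟨i, rfl⟩
    exact K.orderEmbOfFin_mem hK (g i)

lemma natCast_card_traceFamily {n r : ℕ} (C : Set (Fin r → ℝ)) (u : Fin n → ℝ) :
    (#(traceFamily r C u) : ℝ≥0∞)
      = ∑ S ∈ powersetCard r univ, (traceSet S C).indicator 1 u := by
  classical
  simp only [traceFamily, natCast_card_filter, Set.indicator_apply, Pi.one_apply]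

lemma measurable_natCast_card_traceFamily {n r : ℕ} {C : Set (Fin r → ℝ)}
    (hC : MeasurableSet C) :
    Measurable fun u : Fin n → ℝ => (#(traceFamily r C u) : ℝ≥0∞) := by
  simp_rw [natCast_card_traceFamily]
  exact Finset.measurable_sum _ fun S hS =>
    measurable_one.indicator (measurableSet_traceSet (mem_powersetCard.1 hS).2 hC)

lemma lintegral_card_traceFamily {n r : ℕ} {C : Set (Fin r → ℝ)} (hC : MeasurableSet C)
    (hsub : C ⊆ unitCube r) :
    ∫⁻ u in unitCube n, (#(traceFamily r C u) : ℝ≥0∞) = n.choose r * volume C := by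
  simp_rw [natCast_card_traceFamily]
  rw [lintegral_finsetSum _ fun S hS =>
    measurable_one.indicator (measurableSet_traceSet (mem_powersetCard.1 hS).2 hC)]
  calc ∑ S ∈ powersetCard r univ, ∫⁻ u in unitCube n, (traceSet S C).indicator 1 u
      = ∑ _S ∈ powersetCard r (univ : Finset (Fin n)), volume C :=
        sum_congr rfl fun S hS => by
          rw [lintegral_indicator_one (measurableSet_traceSet (mem_powersetCard.1 hS).2 hC),
            volume_restrict_unitCube_traceSet (mem_powersetCard.1 hS).2 hC hsub]
    _ = n.choose r * volume C := by simp

theorem turanNum_le_choose_mul_volume {n k r : ℕ} {C : Set (Fin r → ℝ)}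
    (hsub : C ⊆ unitCube r) (hC : MeasurableSet C) (hcov : CoversCube r k C) :
    (turanNum n k r : ℝ) ≤ n.choose r * (volume C).toReal := by
  obtain ⟨u, hu, hle⟩ := exists_notMem_null_le_lintegral (μ := volume.restrict (unitCube n))
    (measurable_natCast_card_traceFamily (n := n) hC).aemeasurable
    ((Measure.restrict_apply (measurableSet_unitCube n).compl).trans (by simp))
  rw [lintegral_card_traceFamily hC hsub] at hle
  have hvol : volume C ≠ ∞ :=
    ((measure_mono hsub).trans_eq (volume_unitCube r)).trans_lt one_lt_top |>.ne
  calc (turanNum n k r : ℝ) ≤ #(traceFamily r C u) := by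
        exact_mod_cast turanNum_le_card (isTuranSystem_traceFamily hcov (Set.notMem_compl_iff.1 hu))
    _ ≤ n.choose r * (volume C).toReal := by
        simpa using ENNReal.toReal_mono (mul_ne_top (natCast_ne_top _) hvol) hle

lemma card_filter_injective {α β : Type*} [Fintype α] [Fintype β] [DecidableEq α]
    [DecidableEq β] :
    #{φ : α → β | Injective φ} = (Fintype.card β).descFactorial (Fintype.card α) := by
  rw [← Fintype.card_subtype, Fintype.card_congr (Equiv.subtypeInjectiveEquivEmbedding α β),
    Fintype.card_embedding_eq]

lemma card_filter_image_eq_le {α β : Type*} [Fintype α] [Fintype β] [DecidableEq α]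
    [DecidableEq β] {A : Finset β} (hA : #A = Fintype.card α) :
    #{φ : α → β | univ.image φ = A} ≤ (Fintype.card α).factorial := by
  calc #{φ : α → β | univ.image φ = A}
      ≤ #((univ : Finset (α ↪ A)).image fun e : α ↪ A => Subtype.val ∘ e) := by
        refine card_le_card fun φ hφ => ?_
        have himage : univ.image φ = A := (mem_filter.1 hφ).2
        have hinj : Injective φ := by
          rw [← Set.injOn_univ, ← coe_univ, ← card_image_iff, himage, hA, card_univ]
        refine mem_image.2 ⟨⟨fun i => ⟨φ i, himage ▸ mem_image_of_mem φ (mem_univ i)⟩,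
          fun i j h => hinj (congrArg Subtype.val h)⟩, mem_univ _, rfl⟩
    _ ≤ Fintype.card (α ↪ A) := card_image_le
    _ = (Fintype.card α).factorial := by
        rw [Fintype.card_embedding_eq, Fintype.card_coe, hA, Nat.descFactorial_self]

open Classical in
/-- The words with a repeated letter cover every word of `[n]^k` with a repeated letter, which no
Turán system can do, and they occupy only a fraction `1 - n^(r)/n^r → 0` of `[n]^r`. -/
noncomputable def turanCode {n : ℕ} (r : ℕ) (F : Finset (Finset (Fin n))) :
    Finset (Fin r → Fin n) :=
  {φ | ¬ Injective φ ∨ univ.image φ ∈ F}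

lemma isSymmetric_turanCode {n r : ℕ} (F : Finset (Finset (Fin n))) :
    IsSymmetric (turanCode r F : Set (Fin r → Fin n)) := by
  classical
  intro φ hφ σ
  simp only [turanCode, coe_filter, mem_univ, true_and, Set.mem_ofPred_eq] at hφ ⊢
  rwa [σ.injective_comp, ← image_image, image_univ_equiv]

lemma covers_comp_orderEmbOfFin {X : Type*} {k r : ℕ} (a : Fin k → X) {T : Finset (Fin k)}
    (hT : #T = r) : Covers (a ∘ T.orderEmbOfFin hT) a :=
  ⟨_, (T.orderEmbOfFin hT).strictMono, fun _ => rfl⟩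

lemma isCoveringCode_turanCode {n k r : ℕ} (hr : 2 ≤ r) (hrk : r ≤ k)
    {F : Finset (Finset (Fin n))} (hF : IsTuranSystem n k r F) :
    IsCoveringCode r k (turanCode r F : Set (Fin r → Fin n)) := by
  classical
  intro a
  simp only [turanCode, coe_filter, mem_univ, true_and, Set.mem_ofPred_eq]
  by_cases ha : Injective a
  · obtain ⟨A, hAF, hAK⟩ := hF.2 (univ.image a) (by rw [card_image_of_injective _ ha]; simp)
    have hTA : (univ.filter (a · ∈ A)).image a = A := by
      ext y
      simp only [mem_image, mem_filter, mem_univ, true_and]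
      refine ⟨fun ⟨i, hi, hiy⟩ => hiy ▸ hi, fun hy => ?_⟩
      obtain ⟨i, -, rfl⟩ := mem_image.1 (hAK hy)
      exact ⟨i, hy, rfl⟩
    have hT : #(univ.filter (a · ∈ A)) = r := by
      rw [← card_image_of_injective _ ha, hTA, hF.1 A hAF]
    refine ⟨a ∘ _, Or.inr ?_, covers_comp_orderEmbOfFin a hT⟩
    rwa [← image_image, image_orderEmbOfFin_univ, hTA]
  · obtain ⟨p, q, hpq, hne⟩ := not_injective_iff.1 ha
    obtain ⟨T, hpqT, -, hT⟩ := exists_subsuperset_card_eq (n := r) (subset_univ {p, q})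
      (by rwa [card_pair hne]) (by simpa using hrk)
    refine ⟨a ∘ T.orderEmbOfFin hT, Or.inl fun hinj => hne ?_, covers_comp_orderEmbOfFin a hT⟩
    obtain ⟨i, rfl⟩ : p ∈ Set.range (T.orderEmbOfFin hT) := by simp [hpqT (by simp : p ∈ _)]
    obtain ⟨j, rfl⟩ : q ∈ Set.range (T.orderEmbOfFin hT) := by simp [hpqT (by simp : q ∈ _)]
    rw [show i = j from hinj hpq]

lemma card_filter_image_mem_le {n r : ℕ} {F : Finset (Finset (Fin n))}
    (hF : ∀ A ∈ F, #A = r) :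
    #{φ : Fin r → Fin n | univ.image φ ∈ F} ≤ r.factorial * #F := by
  rw [card_eq_sum_card_fiberwise (f := fun φ => univ.image φ) (t := F) fun φ hφ => by
    simpa using hφ]
  calc ∑ A ∈ F, #{φ ∈ {φ : Fin r → Fin n | univ.image φ ∈ F} | univ.image φ = A}
      ≤ ∑ _A ∈ F, r.factorial := sum_le_sum fun A hA =>
        (card_le_card (monotone_filter_left _ (subset_univ _))).trans
          (by simpa using card_filter_image_eq_le (α := Fin r) (by simpa using hF A hA))
    _ = r.factorial * #F := by rw [sum_const, smul_eq_mul, mul_comm]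

lemma card_turanCode_add_descFactorial_le {n r : ℕ} {F : Finset (Finset (Fin n))}
    (hF : ∀ A ∈ F, #A = r) :
    #(turanCode r F) + n.descFactorial r ≤ n ^ r + r.factorial * #F := by
  classical
  have hsplit := card_filter_add_card_filter_not (s := (univ : Finset (Fin r → Fin n))) Injective
  rw [card_filter_injective, card_univ, Fintype.card_pi] at hsplit
  simp only [Fintype.card_fin, prod_const, card_univ] at hsplit
  calc #(turanCode r F) + n.descFactorial r
      ≤ #{φ : Fin r → Fin n | ¬ Injective φ} + #{φ : Fin r → Fin n | univ.image φ ∈ F}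
        + n.descFactorial r := by
        gcongr
        rw [turanCode, filter_or]
        exact card_union_le _ _
    _ ≤ n ^ r + r.factorial * #F := by
        have := card_filter_image_mem_le hF
        omega

-- The clamp puts `x = 1` into the last cell `[(n-1)/n, 1]`.
noncomputable def cellIndex (n : ℕ) [NeZero n] (x : ℝ) : Fin n :=
  ⟨min ⌊x * n⌋₊ (n - 1), (min_le_right _ _).trans_lt (Nat.sub_lt (NeZero.pos n) one_pos)⟩

section Cells

variable {n : ℕ} [NeZero n]

lemma measurable_cellIndex : Measurable (cellIndex n) :=
  (measurable_from_nat (f := fun m : ℕ => (⟨min m (n - 1),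
    (min_le_right _ _).trans_lt (Nat.sub_lt (NeZero.pos n) one_pos)⟩ : Fin n))).comp
    (Nat.measurable_floor.comp (measurable_id.mul_const _))

lemma Icc_inter_cellIndex_preimage_subset (v : Fin n) :
    Set.Icc 0 1 ∩ cellIndex n ⁻¹' {v} ⊆ Set.Icc ((v : ℝ) / n) ((v + 1) / n) := by
  rintro x ⟨⟨hx0, hx1⟩, hxv⟩
  have hn : (0 : ℝ) < n := Nat.cast_pos.2 (NeZero.pos n)
  have hv : min ⌊x * n⌋₊ (n - 1) = v := congrArg Fin.val hxv
  rw [Set.mem_Icc, div_le_iff₀ hn, le_div_iff₀ hn]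
  have hvx : (v : ℝ) ≤ ⌊x * n⌋₊ := by exact_mod_cast hv ▸ min_le_left _ _
  refine ⟨hvx.trans (Nat.floor_le (by positivity)), ?_⟩
  rcases min_cases ⌊x * n⌋₊ (n - 1) with ⟨h, -⟩ | ⟨h, -⟩
  · exact (Nat.lt_floor_add_one _).le.trans (by rw [← hv, h])
  · have : (v : ℝ) + 1 = n := by
      rw [← hv, h]
      exact_mod_cast Nat.sub_add_cancel (NeZero.pos n)
    rw [this]
    exact mul_le_of_le_one_left hn.le hx1

lemma volume_Icc_inter_cellIndex_preimage_le (v : Fin n) :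
    volume (Set.Icc 0 1 ∩ cellIndex n ⁻¹' {v}) ≤ (n : ℝ≥0∞)⁻¹ := by
  calc volume (Set.Icc 0 1 ∩ cellIndex n ⁻¹' {v})
      ≤ volume (Set.Icc ((v : ℝ) / n) ((v + 1) / n)) :=
        measure_mono (Icc_inter_cellIndex_preimage_subset v)
    _ = (n : ℝ≥0∞)⁻¹ := by
        rw [Real.volume_Icc, ← sub_div, add_sub_cancel_left, one_div,
          ENNReal.ofReal_inv_of_pos (Nat.cast_pos.2 (NeZero.pos n)), ofReal_natCast]

def cubeCode {r : ℕ} (D : Set (Fin r → Fin n)) : Set (Fin r → ℝ) :=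
  unitCube r ∩ (fun x => cellIndex n ∘ x) ⁻¹' D

lemma measurableSet_cubeCode {r : ℕ} (D : Set (Fin r → Fin n)) : MeasurableSet (cubeCode D) :=
  (measurableSet_unitCube r).inter <|
    (measurable_pi_lambda _ fun i => measurable_cellIndex.comp (measurable_pi_apply i))
      D.to_countable.measurableSet

lemma cubeCode_subset_unitCube {r : ℕ} (D : Set (Fin r → Fin n)) : cubeCode D ⊆ unitCube r :=
  Set.inter_subset_left

lemma isSymmetric_cubeCode {r : ℕ} {D : Set (Fin r → Fin n)} (hD : IsSymmetric D) :
    IsSymmetric (cubeCode D) :=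
  fun _ ⟨hx, hxD⟩ σ => ⟨fun i => hx (σ i), hD _ hxD σ⟩

lemma coversCube_cubeCode {r k : ℕ} {D : Set (Fin r → Fin n)} (hD : IsCoveringCode r k D) :
    CoversCube r k (cubeCode D) := by
  intro a ha
  obtain ⟨φ, hφD, g, hg, hφ⟩ := hD (cellIndex n ∘ a)
  refine ⟨a ∘ g, ⟨fun i => ha (g i), ?_⟩, g, hg, fun _ => rfl⟩
  rwa [Set.mem_preimage, show cellIndex n ∘ a ∘ g = φ from funext hφ]

lemma volume_cubeCode_le {r : ℕ} (D : Finset (Fin r → Fin n)) :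
    volume (cubeCode (D : Set (Fin r → Fin n))) ≤ #D * ((n : ℝ≥0∞) ^ r)⁻¹ := by
  have hcover : cubeCode (D : Set (Fin r → Fin n))
      ⊆ ⋃ φ ∈ D, Set.univ.pi fun i => Set.Icc 0 1 ∩ cellIndex n ⁻¹' {φ i} :=
    fun x ⟨hx, hxD⟩ => Set.mem_biUnion hxD fun i _ => ⟨hx i, rfl⟩
  calc volume (cubeCode (D : Set (Fin r → Fin n)))
      ≤ ∑ φ ∈ D, volume (Set.univ.pi fun i => Set.Icc 0 1 ∩ cellIndex n ⁻¹' {φ i}) :=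
        (measure_mono hcover).trans (measure_biUnion_finset_le _ _)
    _ ≤ ∑ _φ ∈ D, ((n : ℝ≥0∞) ^ r)⁻¹ := sum_le_sum fun φ _ => by
        rw [volume_pi_pi, ENNReal.inv_pow]
        simpa using prod_le_prod' (s := univ) fun i _ =>
          volume_Icc_inter_cellIndex_preimage_le (φ i)
    _ = #D * ((n : ℝ≥0∞) ^ r)⁻¹ := by rw [sum_const, nsmul_eq_mul]

end Cells

theorem exists_symmetric_coversCube_volume_le {r k : ℕ} (hr : 2 ≤ r) (hrk : r ≤ k) (n : ℕ)
    [NeZero n] :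
    ∃ C : Set (Fin r → ℝ), C ⊆ unitCube r ∧ MeasurableSet C ∧ IsSymmetric C ∧
      CoversCube r k C ∧ (volume C).toReal
        ≤ ((n : ℝ) ^ r + r.factorial * turanNum n k r - n.descFactorial r) / n ^ r := by
  obtain ⟨F, hF, hFcard⟩ := exists_isTuranSystem_card_eq_turanNum (n := n) hrk
  set D := turanCode r F
  refine ⟨cubeCode (D : Set (Fin r → Fin n)), cubeCode_subset_unitCube _,
    measurableSet_cubeCode _,
    isSymmetric_cubeCode (isSymmetric_turanCode F),
    coversCube_cubeCode (isCoveringCode_turanCode hr hrk hF), ?_⟩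
  have hcard : (#D : ℝ) + n.descFactorial r ≤ (n : ℝ) ^ r + r.factorial * turanNum n k r := by
    exact_mod_cast hFcard ▸ card_turanCode_add_descFactorial_le hF.1
  calc (volume (cubeCode (D : Set (Fin r → Fin n)))).toReal
      ≤ (#D * ((n : ℝ≥0∞) ^ r)⁻¹).toReal :=
        ENNReal.toReal_mono (mul_ne_top (natCast_ne_top _) (inv_ne_top.2 (by simp [NeZero.ne n])))
          (volume_cubeCode_le D)
    _ = #D / n ^ r := by simp [div_eq_mul_inv]
    _ ≤ _ := by gcongr; linarith

theorem tendsto_descFactorial_div_pow (r : ℕ) :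
    Tendsto (fun n : ℕ => (n.descFactorial r : ℝ) / n ^ r) atTop (𝓝 1) :=
  (Asymptotics.isEquivalent_iff_tendsto_one
    ((eventually_ge_atTop 1).mono fun n hn => by positivity)).1 (isEquivalent_descFactorial r)

theorem tendsto_pow_add_factorial_mul_sub_descFactorial_div_pow {r : ℕ} {a : ℕ → ℝ}
    {t : ℝ} (ha : Tendsto (fun n => a n / n.choose r) atTop (𝓝 t)) :
    Tendsto (fun n : ℕ => ((n : ℝ) ^ r + r.factorial * a n - n.descFactorial r) / n ^ r)
      atTop (𝓝 t) := by
  have hd := tendsto_descFactorial_div_pow r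
  have hlim := (tendsto_const_nhds (x := (1 : ℝ))).sub hd |>.add (ha.mul hd)
  rw [sub_self, zero_add, mul_one] at hlim
  refine hlim.congr' ?_
  filter_upwards [eventually_ge_atTop r, eventually_ge_atTop 1] with n hrn hn
  have hC : (n.choose r : ℝ) ≠ 0 := by exact_mod_cast (Nat.choose_pos hrn).ne'
  have : (n : ℝ) ≠ 0 := by positivity
  rw [Nat.descFactorial_eq_factorial_mul_choose]
  push_cast
  field_simp
  ring

/-- For `2 ≤ r < k`, the Turán density `t(k,r) = lim T(n,k,r)/C(n,r)` equals
the infimum of `λ(C)` over all Lebesgue measurable symmetric covering `(k-r)`-insertion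
codes `C ⊆ [0,1]^r`. -/
theorem turan_density_eq_symmetric_inf {r k : ℕ} (hr : 2 ≤ r) (hrk : r < k) (t : ℝ)
    (ht : Tendsto (fun n : ℕ => (turanNum n k r : ℝ) / (n.choose r : ℝ)) atTop (𝓝 t)) :
    t = sInf {v : ℝ | ∃ C : Set (Fin r → ℝ), C ⊆ unitCube r ∧ MeasurableSet C ∧
      IsSymmetric C ∧ CoversCube r k C ∧ (volume C).toReal = v} := by
  set S := {v : ℝ | ∃ C : Set (Fin r → ℝ), C ⊆ unitCube r ∧ MeasurableSet C ∧
      IsSymmetric C ∧ CoversCube r k C ∧ (volume C).toReal = v}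
  have hlower : ∀ v ∈ S, t ≤ v := by
    rintro _ ⟨C, hsub, hC, -, hcov, rfl⟩
    refine le_of_tendsto ht ((eventually_ge_atTop r).mono fun n hn => ?_)
    rw [div_le_iff₀ (by exact_mod_cast Nat.choose_pos hn), mul_comm]
    exact turanNum_le_choose_mul_volume hsub hC hcov
  have hupper : ∀ n : ℕ, 0 < n → ∃ v ∈ S,
      v ≤ ((n : ℝ) ^ r + r.factorial * turanNum n k r - n.descFactorial r) / n ^ r := by
    intro n hn
    have : NeZero n := ⟨hn.ne'⟩
    obtain ⟨C, hsub, hC, hsymm, hcov, hvol⟩ := exists_symmetric_coversCube_volume_le hr hrk.le n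
    exact ⟨_, ⟨C, hsub, hC, hsymm, hcov, rfl⟩, hvol⟩
  obtain ⟨v, hv, -⟩ := hupper 1 one_pos
  refine le_antisymm (le_csInf ⟨v, hv⟩ hlower)
    (ge_of_tendsto (tendsto_pow_add_factorial_mul_sub_descFactorial_div_pow ht) ?_)
  filter_upwards [eventually_gt_atTop 0] with n hn
  obtain ⟨v, hv, hvn⟩ := hupper n hn
  exact (csInf_le ⟨t, hlower⟩ hv).trans hvn
end

section
/- For all integers 1 < r < k < n, S(n,k,r) ≤ r! · T(n,k,r) + (n^r − n(n−1)⋯(n−r+1)), where S(n,k,r) is the minimum size of a covering (k−r)-insertion code over [n] and T(n,k,r) is the minimum size of a Turán (n,k,r)-system. -/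
open MeasureTheory Filter Topology ENNReal

/-!
Let `F` be an optimal Turán `(n,k,r)`-system. The code consists of all non-injective words of
length `r` together with the `r!` orderings of each member of `F`. A word `a` of length `k` with
a repeated letter contains a non-injective subword of length `r`: keep two positions carrying
equal letters and `r - 2` others. If `a` is injective, its letters form a `k`-set, which contains
some `A ∈ F`, and the letters of `A` appear in `a` as an ordering of `A`.
-/

open Finset Function

section Words

variable {α : Type*} {r k : ℕ}

lemma covers_comp_orderEmbOfFin_s11 (a : Fin k → α) (S : Finset (Fin k)) (hS : #S = r) :
    Covers (a ∘ S.orderEmbOfFin hS) a :=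
  ⟨S.orderEmbOfFin hS, (S.orderEmbOfFin hS).strictMono, fun _ => rfl⟩

lemma exists_not_injective_covers (hr : 2 ≤ r) (hrk : r ≤ k) (a : Fin k → α)
    (ha : ¬Injective a) : ∃ x : Fin r → α, ¬Injective x ∧ Covers x a := by
  obtain ⟨i, j, hij, hne⟩ := not_injective_iff.mp ha
  obtain ⟨S, hijS, hS⟩ := exists_superset_card_eq (s := {i, j}) (n := r)
    (by rw [card_pair hne]; exact hr) (by simpa using hrk)
  have hmem : ∀ p ∈ S, ∃ q, S.orderEmbOfFin hS q = p := fun p hp =>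
    (S.range_orderEmbOfFin hS).ge hp
  obtain ⟨p, rfl⟩ := hmem i (hijS (by simp))
  obtain ⟨q, rfl⟩ := hmem j (hijS (by simp))
  refine ⟨a ∘ S.orderEmbOfFin hS, fun hinj => hne ?_, covers_comp_orderEmbOfFin_s11 a S hS⟩
  exact congrArg _ (hinj hij)

variable [DecidableEq α]

lemma exists_injective_covers_of_subset (a : Fin k → α) (ha : Injective a)
    (A : Finset α) (hAr : #A = r) (hA : A ⊆ univ.image a) :
    ∃ x : Fin r → α, Injective x ∧ univ.image x = A ∧ Covers x a := by
  set S := A.preimage a ha.injOn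
  have hSA : S.image a = A := by
    rw [image_preimage, filter_true_of_mem]
    intro b hb
    simpa using hA hb
  have hS : #S = r := by rw [← hAr, ← hSA, card_image_of_injective _ ha]
  refine ⟨a ∘ S.orderEmbOfFin hS, ha.comp (S.orderEmbOfFin hS).injective, ?_,
    covers_comp_orderEmbOfFin_s11 a S hS⟩
  rw [← image_image, image_orderEmbOfFin_univ, hSA]

variable [Fintype α] (α r)

def nonInjectiveWords : Finset (Fin r → α) := {x | ¬Injective x}

lemma card_nonInjectiveWords :
    #(nonInjectiveWords α r) = Fintype.card α ^ r - (Fintype.card α).descFactorial r := by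
  have hinj : #({x | Injective x} : Finset (Fin r → α)) = (Fintype.card α).descFactorial r := by
    rw [← Fintype.card_subtype, Fintype.card_congr (Equiv.subtypeInjectiveEquivEmbedding _ _),
      Fintype.card_embedding_eq, Fintype.card_fin]
  have htotal := card_filter_add_card_filter_not (s := (univ : Finset (Fin r → α))) Injective
  rw [card_univ, Fintype.card_fun, Fintype.card_fin, hinj] at htotal
  rw [nonInjectiveWords]
  omega

variable {α r}

def orderingsOf (F : Finset (Finset α)) : Finset (Fin r → α) :=
  {x | Injective x ∧ univ.image x ∈ F}

lemma card_orderings_le (A : Finset α) (hA : #A = r) :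
    #({x | Injective x ∧ univ.image x = A} : Finset (Fin r → α)) ≤ r.factorial := by
  calc _ ≤ #(univ : Finset (Fin r ↪ A)) := by
        refine card_le_card_of_surjOn (fun e => Subtype.val ∘ e) fun x hx => ?_
        simp only [coe_filter, mem_univ, true_and, Set.mem_ofPred_eq] at hx
        refine ⟨⟨fun i => ⟨x i, hx.2 ▸ mem_image_of_mem x (mem_univ i)⟩,
          fun i j h => hx.1 (congrArg Subtype.val h)⟩, mem_coe.mpr (mem_univ _), rfl⟩
    _ = r.factorial := by
        rw [card_univ, Fintype.card_embedding_eq, Fintype.card_coe, hA, Fintype.card_fin,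
          Nat.descFactorial_self]

lemma card_orderingsOf_le (F : Finset (Finset α)) (hF : ∀ A ∈ F, #A = r) :
    #(orderingsOf (r := r) F) ≤ r.factorial * #F := by
  refine card_le_mul_card_image_of_maps_to (f := fun x => univ.image x)
    (fun x hx => (mem_filter.mp hx).2.2) _ fun A hA => ?_
  refine le_trans (card_le_card fun x hx => ?_) (card_orderings_le A (hF A hA))
  simp only [orderingsOf, mem_filter, mem_univ, true_and] at hx ⊢
  exact ⟨hx.1.1, hx.2⟩

end Words

lemma isCoveringCode_nonInjectiveWords_union_orderingsOf {n k r : ℕ} (hr : 2 ≤ r)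
    (hrk : r ≤ k) {F : Finset (Finset (Fin n))} (hF : IsTuranSystem n k r F) :
    IsCoveringCode r k (↑(nonInjectiveWords (Fin n) r ∪ orderingsOf F) : Set (Fin r → Fin n)) := by
  intro a
  by_cases ha : Injective a
  · obtain ⟨A, hAF, hAa⟩ := hF.2 (univ.image a) (by simp [card_image_of_injective _ ha])
    obtain ⟨x, hx, hxA, hxa⟩ := exists_injective_covers_of_subset a ha A (hF.1 A hAF) hAa
    exact ⟨x, by simp [orderingsOf, hx, hxA, hAF], hxa⟩
  · obtain ⟨x, hx, hxa⟩ := exists_not_injective_covers hr hrk a ha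
    exact ⟨x, by simp [nonInjectiveWords, hx], hxa⟩

lemma covNum_le_card {n k r : ℕ} {C : Finset (Fin r → Fin n)}
    (hC : IsCoveringCode r k (↑C : Set (Fin r → Fin n))) : covNum n k r ≤ #C :=
  Nat.sInf_le ⟨C, hC, rfl⟩

theorem covNum_le_turanNum_general {n k r : ℕ} (hr : 1 < r) (hrk : r < k) :
    covNum n k r ≤ r.factorial * turanNum n k r + (n ^ r - n.descFactorial r) := by
  obtain ⟨F, hF, hFcard⟩ := exists_isTuranSystem_card_eq_turanNum (n := n) hrk.le
  calc covNum n k r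
      ≤ #(nonInjectiveWords (Fin n) r ∪ orderingsOf F) :=
        covNum_le_card (isCoveringCode_nonInjectiveWords_union_orderingsOf hr hrk.le hF)
    _ ≤ #(nonInjectiveWords (Fin n) r) + #(orderingsOf (r := r) F) := card_union_le _ _
    _ ≤ (n ^ r - n.descFactorial r) + r.factorial * turanNum n k r := by
        rw [card_nonInjectiveWords, Fintype.card_fin, ← hFcard]
        exact Nat.add_le_add_left (card_orderingsOf_le F hF.1) _
    _ = r.factorial * turanNum n k r + (n ^ r - n.descFactorial r) := Nat.add_comm _ _

/-- For `1 < r < k < n`,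
`S(n,k,r) ≤ r! · T(n,k,r) + (n^r − n(n−1)⋯(n−r+1))`. -/
theorem covNum_le_turanNum {n k r : ℕ} (hr : 1 < r) (hrk : r < k) (hkn : k < n) :
    covNum n k r ≤ r.factorial * turanNum n k r + (n ^ r - n.descFactorial r) :=
  covNum_le_turanNum_general hr hrk
end
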